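/- arXiv:2302.03805 — 6 statements merged into one kernel-verified Lean document; each statement's English description precedes it below -/
import Mathlib

section
/- Let w, V₁, V₂ ∈ ℝ^k with ⟨w, V₁⟩ > 0, let C_α ≥ 1 and ε > 0, and let α := ⟨w, V₂⟩/⟨w, V₁⟩. Suppose α̂ ∈ [0, C_α] satisfies: either α̂ ≤ 1 and |α̂·⟨w, V₁⟩ − ⟨w, V₂⟩| ≤ ε, or α̂ > 1 and |⟨w, V₁⟩ − ⟨w, V₂⟩/α̂| ≤ ε. Then |α̂ − α| ≤ C_α·ε/⟨w, V₁⟩. In particular, if moreover ⟨w, V₁⟩ ≥ v*/(2k) for some v* > 0 and C_α = 2k, then |α̂ − α| ≤ 4k²·ε/v*. -/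
open scoped RealInnerProductSpace

/-- Accuracy of the basis ratios computed by binary search
(second part of Lemma 3.1 / Algorithm 2). -/
theorem stmt3 (k : ℕ) (w V₁ V₂ : EuclideanSpace ℝ (Fin k))
    (hV₁ : 0 < ⟪w, V₁⟫) (Cα : ℝ) (hCα : 1 ≤ Cα) (ε : ℝ) (hε : 0 < ε)
    (α : ℝ) (hα : α = ⟪w, V₂⟫ / ⟪w, V₁⟫)
    (αhat : ℝ) (hαhat0 : 0 ≤ αhat) (hαhatC : αhat ≤ Cα)
    (hcase : (αhat ≤ 1 ∧ |αhat * ⟪w, V₁⟫ - ⟪w, V₂⟫| ≤ ε) ∨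
             (1 < αhat ∧ |⟪w, V₁⟫ - ⟪w, V₂⟫ / αhat| ≤ ε)) :
    |αhat - α| ≤ Cα * ε / ⟪w, V₁⟫ ∧
      (∀ vstar : ℝ, 0 < vstar → vstar / (2 * k) ≤ ⟪w, V₁⟫ → Cα = 2 * k →
        |αhat - α| ≤ 4 * (k : ℝ) ^ 2 * ε / vstar) := by
  set A := (⟪w, V₁⟫ : ℝ) with hA
  set B := (⟪w, V₂⟫ : ℝ) with hB
  have hAne : A ≠ 0 := ne_of_gt hV₁
  have key : |αhat * A - B| ≤ Cα * ε := by
    rcases hcase with ⟨h1, h2⟩ | ⟨h1, h2⟩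
    · calc |αhat * A - B| ≤ ε := h2
        _ ≤ Cα * ε := le_mul_of_one_le_left hε.le hCα
    · have hpos : 0 < αhat := lt_trans one_pos h1
      have heq : αhat * A - B = αhat * (A - B / αhat) := by
        field_simp
      rw [heq, abs_mul, abs_of_pos hpos]
      exact mul_le_mul hαhatC h2 (abs_nonneg _) (le_trans zero_le_one hCα)
  have main : |αhat - α| ≤ Cα * ε / A := by
    rw [hα]
    have heq : αhat - B / A = (αhat * A - B) / A := by field_simp
    rw [heq, abs_div, abs_of_pos hV₁]
    gcongr
  refine ⟨main, fun vstar hv hvA hCk => ?_⟩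
  have hk : (0 : ℝ) < 2 * k := by
    by_contra hk
    push_neg at hk
    have : (2 : ℝ) * k = 0 := le_antisymm hk (by positivity)
    rw [hCk, this] at hCα; linarith
  have hA' : vstar / (2 * k) ≤ A := hvA
  refine main.trans ?_
  rw [hCk, div_le_div_iff₀ hV₁ hv]
  have h1 : vstar ≤ 2 * k * A := by
    rw [div_le_iff₀ hk] at hA'; linarith [hA']
  calc 2 * (k : ℝ) * ε * vstar ≤ 2 * k * ε * (2 * k * A) := by
        apply mul_le_mul_of_nonneg_left h1; positivity
    _ = 4 * (k : ℝ) ^ 2 * ε * A := by ring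
end

section
/- Let u, v be vectors in a real inner product space with u ≠ 0, let v⊥ := v − (⟨v, u⟩/‖u‖²)·u be the component of v orthogonal to u, and assume ‖v⊥‖ ≥ δ for some δ > 0. Then for all α, α̂ ∈ ℝ, the vectors α̂·u − v and α·u − v are nonzero and the angle between them, arccos(⟨α̂·u − v, α·u − v⟩/(‖α̂·u − v‖·‖α·u − v‖)), is at most |α̂ − α|·‖u‖/δ. -/
open scoped RealInnerProductSpace

/-!
Write `v = c • u + w` with `w ⟂ u`, so that `s • u - v = (s - c) • u - w`. In the plane spanned
by `u` and `w` this vector makes the angle `arctan ((s - c) * ‖u‖ / ‖w‖)` with `-w`, so the angle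
between two such vectors is a difference of two arctangents, and `arctan` is `1`-Lipschitz.
Such a vector is never zero, since its inner product with `w` is `-‖w‖ ^ 2`.
-/

namespace Real

theorem lipschitzWith_arctan : LipschitzWith 1 arctan :=
  lipschitzWith_of_nnnorm_deriv_le differentiable_arctan fun x => by
    rw [← NNReal.coe_le_coe, coe_nnnorm, deriv_arctan, norm_of_nonneg (by positivity),
      NNReal.coe_one, div_le_one (by positivity)]
    nlinarith [sq_nonneg x]

theorem abs_arctan_sub_arctan_le (x y : ℝ) : |arctan x - arctan y| ≤ |x - y| := by
  simpa [edist_dist] using! lipschitzWith_arctan x y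

theorem abs_arctan_sub_arctan_lt_pi (x y : ℝ) : |arctan x - arctan y| < π := by
  rw [abs_sub_lt_iff]
  constructor <;> linarith [arctan_lt_pi_div_two x, neg_pi_div_two_lt_arctan x,
    arctan_lt_pi_div_two y, neg_pi_div_two_lt_arctan y]

theorem cos_arctan_div_sub_arctan_div (p q : ℝ) {r : ℝ} (hr : 0 < r) :
    cos (arctan (p / r) - arctan (q / r)) =
      (p * q + r ^ 2) / (√(p ^ 2 + r ^ 2) * √(q ^ 2 + r ^ 2)) := by
  have sqrt_one_add_div_sq (x : ℝ) : √(1 + (x / r) ^ 2) = √(x ^ 2 + r ^ 2) / r := by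
    rw [show 1 + (x / r) ^ 2 = (x ^ 2 + r ^ 2) / r ^ 2 by field_simp; ring,
      sqrt_div' _ (by positivity), sqrt_sq hr.le]
  have hp : 0 < √(p ^ 2 + r ^ 2) := sqrt_pos.2 (by positivity)
  have hq : 0 < √(q ^ 2 + r ^ 2) := sqrt_pos.2 (by positivity)
  rw [cos_sub, cos_arctan, sin_arctan, cos_arctan, sin_arctan, sqrt_one_add_div_sq,
    sqrt_one_add_div_sq]
  field_simp
  ring

end Real

namespace InnerProductGeometry

open Real

variable {E : Type*} [NormedAddCommGroup E] [InnerProductSpace ℝ E]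

theorem norm_smul_sub_of_inner_eq_zero {u w : E} (huw : ⟪u, w⟫ = 0) (s : ℝ) :
    ‖s • u - w‖ = √((s * ‖u‖) ^ 2 + ‖w‖ ^ 2) := by
  rw [← sqrt_sq (norm_nonneg _), norm_sub_sq_real, real_inner_smul_left, huw, norm_smul,
    norm_eq_abs, mul_pow, sq_abs, mul_pow]
  ring_nf

theorem inner_smul_sub_smul_sub_of_inner_eq_zero {u w : E} (huw : ⟪u, w⟫ = 0) (s t : ℝ) :
    ⟪s • u - w, t • u - w⟫ = (s * ‖u‖) * (t * ‖u‖) + ‖w‖ ^ 2 := by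
  simp only [inner_sub_left, inner_sub_right, real_inner_smul_left, real_inner_smul_right,
    huw, real_inner_comm u w ▸ huw, real_inner_self_eq_norm_sq]
  ring

theorem angle_smul_sub_smul_sub_of_inner_eq_zero {u w : E} (huw : ⟪u, w⟫ = 0) (hw : w ≠ 0)
    (s t : ℝ) :
    angle (s • u - w) (t • u - w) =
      |arctan (s * ‖u‖ / ‖w‖) - arctan (t * ‖u‖ / ‖w‖)| := by
  have hw' : 0 < ‖w‖ := norm_pos_iff.2 hw
  rw [angle, inner_smul_sub_smul_sub_of_inner_eq_zero huw, norm_smul_sub_of_inner_eq_zero huw,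
    norm_smul_sub_of_inner_eq_zero huw, ← cos_arctan_div_sub_arctan_div _ _ hw', ← cos_abs,
    arccos_cos (abs_nonneg _) (abs_arctan_sub_arctan_lt_pi _ _).le]

theorem angle_smul_sub_smul_sub_le_of_inner_eq_zero {u w : E} (huw : ⟪u, w⟫ = 0) (hw : w ≠ 0)
    (s t : ℝ) :
    angle (s • u - w) (t • u - w) ≤ |s - t| * ‖u‖ / ‖w‖ := by
  rw [angle_smul_sub_smul_sub_of_inner_eq_zero huw hw]
  calc _ ≤ |s * ‖u‖ / ‖w‖ - t * ‖u‖ / ‖w‖| := abs_arctan_sub_arctan_le _ _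
    _ = |s - t| * ‖u‖ / ‖w‖ := by
      rw [← sub_div, ← sub_mul, abs_div, abs_mul, abs_norm, abs_norm]

end InnerProductGeometry

theorem real_inner_sub_inner_div_norm_sq_smul_eq_zero {E : Type*} [NormedAddCommGroup E]
    [InnerProductSpace ℝ E] (u v : E) : ⟪u, v - (⟪v, u⟫ / ‖u‖ ^ 2) • u⟫ = 0 := by
  rcases eq_or_ne u 0 with rfl | hu
  · simp
  · rw [inner_sub_right, real_inner_smul_right, real_inner_self_eq_norm_sq, real_inner_comm,
      div_mul_cancel₀ _ (by positivity), sub_self]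

theorem stmt6_general {E : Type*} [NormedAddCommGroup E] [InnerProductSpace ℝ E]
    (u v : E) (δ : ℝ) (hδ : 0 < δ)
    (hperp : δ ≤ ‖v - (⟪v, u⟫ / ‖u‖ ^ 2) • u‖) :
    ∀ α αhat : ℝ,
      αhat • u - v ≠ 0 ∧ α • u - v ≠ 0 ∧
      Real.arccos (⟪αhat • u - v, α • u - v⟫ / (‖αhat • u - v‖ * ‖α • u - v‖))
        ≤ |αhat - α| * ‖u‖ / δ := by
  intro α αhat
  set c := ⟪v, u⟫ / ‖u‖ ^ 2
  set w := v - c • u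
  have huw : ⟪u, w⟫ = 0 := real_inner_sub_inner_div_norm_sq_smul_eq_zero u v
  have hw : 0 < ‖w‖ := hδ.trans_le hperp
  have hsub (s : ℝ) : s • u - v = (s - c) • u - w := by module
  have hne (s : ℝ) : s • u - v ≠ 0 := by
    intro h
    have : ⟪s • u - v, w⟫ = -‖w‖ ^ 2 := by
      rw [hsub, inner_sub_left, real_inner_smul_left, huw, real_inner_self_eq_norm_sq]; ring
    rw [h, inner_zero_left] at this
    nlinarith
  refine ⟨hne αhat, hne α, ?_⟩
  calc InnerProductGeometry.angle (αhat • u - v) (α • u - v)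
      ≤ |(αhat - c) - (α - c)| * ‖u‖ / ‖w‖ := by
        rw [hsub, hsub]
        exact InnerProductGeometry.angle_smul_sub_smul_sub_le_of_inner_eq_zero huw
          (norm_pos_iff.1 hw) _ _
    _ ≤ |αhat - α| * ‖u‖ / δ := by
        rw [sub_sub_sub_cancel_right]
        gcongr

/-- Perturbing the coefficient α in α·u − v rotates the vector by
an angle at most |α̂ − α|·‖u‖/δ, provided the component of v orthogonal to u has
norm at least δ. -/
theorem stmt6 {E : Type*} [NormedAddCommGroup E] [InnerProductSpace ℝ E]
    (u v : E) (hu : u ≠ 0) (δ : ℝ) (hδ : 0 < δ)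
    (hperp : δ ≤ ‖v - (⟪v, u⟫ / ‖u‖ ^ 2) • u‖) :
    ∀ α αhat : ℝ,
      αhat • u - v ≠ 0 ∧ α • u - v ≠ 0 ∧
      Real.arccos (⟪αhat • u - v, α • u - v⟫ / (‖αhat • u - v‖ * ‖α • u - v‖))
        ≤ |αhat - α| * ‖u‖ / δ :=
  stmt6_general u v δ hδ hperp
end

section
/- Let k ≥ 1, δ ≥ 0, let 𝒱 ⊆ ℝ^k, let V₁, …, V_m ∈ ℝ^k and α₁, …, α_{m−1} ∈ ℝ, set S := span{V₁, …, V_m}, and let B ⊆ ℝ^k be a subspace orthogonal to S. Assume every v ∈ 𝒱 lies in S + B and the orthogonal projection of v onto B has norm at most √k·δ. Let w′ ∈ ℝ^k satisfy ⟨V₁, w′⟩ = 1 and ⟨αᵢ·V₁ − V_{i+1}, w′⟩ = 0 for every 1 ≤ i ≤ m−1. Then every w ∈ ℝ^k satisfying ⟨V₁, w⟩ = 1, ⟨αᵢ·V₁ − V_{i+1}, w⟩ = 0 for every 1 ≤ i ≤ m−1, and ⟨b, w⟩ = 0 for every b ∈ B, satisfies |⟨w, v⟩ − ⟨w′, v⟩|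 ≤ √k·δ·‖w′‖ for every v ∈ 𝒱. -/
/-!
The constraints pin each `⟪V (i+1), ·⟫` to `α i * ⟪V 1, ·⟫` and `⟪V 1, ·⟫` to `1`, so any two
solutions `w`, `w'` agree on `S = span {V₁, …, V_m}`, i.e. `w - w' ⟂ S`. Write `v = s + b` with
`s ∈ S`, `b ∈ B`; as `S ⟂ B`, `b` is the orthogonal projection of `v` onto `B`. Since also `w ⟂ B`,
`⟪w, v⟫ - ⟪w', v⟫ = ⟪w - w', b⟫ = -⟪w', b⟫`, which Cauchy–Schwarz bounds by `‖w'‖ * ‖b‖`.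
-/

open scoped RealInnerProductSpace

namespace Submodule

variable {𝕜 E : Type*} [RCLike 𝕜] [NormedAddCommGroup E] [InnerProductSpace 𝕜 E]

theorem sub_starProjection_mem_of_mem_sup {S B : Submodule 𝕜 E} [B.HasOrthogonalProjection]
    (hSB : S ⟂ B) {v : E} (hv : v ∈ S ⊔ B) : v - B.starProjection v ∈ S := by
  obtain ⟨s, hs, b, hb, rfl⟩ := mem_sup.mp hv
  have hs_proj : B.starProjection s = 0 := (starProjection_apply_eq_zero_iff B).mpr (hSB hs)
  rwa [map_add, hs_proj, starProjection_eq_self_iff.mpr hb, zero_add, add_sub_cancel_right]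

theorem sub_mem_orthogonal_span_of_inner_eq {s : Set E} {w w' : E}
    (h : ∀ x ∈ s, inner 𝕜 x w = inner 𝕜 x w') : w - w' ∈ (span 𝕜 s)ᗮ := by
  have hortho : span 𝕜 s ⟂ 𝕜 ∙ (w - w') :=
    isOrtho_span.mpr fun x hx y hy => by
      rw [Set.mem_singleton_iff.mp hy, inner_sub_right, h x hx, sub_self]
  exact (span_singleton_le_iff_mem _ _).mp hortho.symm

end Submodule

section RealInnerProductSpace

variable {E : Type*} [NormedAddCommGroup E] [InnerProductSpace ℝ E]

theorem abs_inner_sub_inner_le_of_mem_sup {S B : Submodule ℝ E} [B.HasOrthogonalProjection]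
    (hSB : S ⟂ B) {v w w' : E} (hv : v ∈ S ⊔ B) (hS : w - w' ∈ Sᗮ) (hB : w ∈ Bᗮ) :
    |⟪w, v⟫ - ⟪w', v⟫| ≤ ‖w'‖ * ‖B.starProjection v‖ := by
  set p := B.starProjection v
  have hp : p ∈ B := B.starProjection_apply_mem v
  have hvp : ⟪w - w', v - p⟫ = 0 :=
    Submodule.inner_left_of_mem_orthogonal (Submodule.sub_starProjection_mem_of_mem_sup hSB hv) hS
  have hwp : ⟪w, p⟫ = 0 := Submodule.inner_left_of_mem_orthogonal hp hB
  have key : ⟪w, v⟫ - ⟪w', v⟫ = -⟪w', p⟫ := by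
    rw [← inner_sub_left, ← sub_add_cancel v p, inner_add_right, hvp, inner_sub_left, hwp]
    ring
  rw [key, abs_neg]
  exact abs_real_inner_le_norm w' p

theorem inner_eq_of_inner_smul_sub_eq_zero {V : ℕ → E} {α : ℕ → ℝ} {m : ℕ} {w w' : E}
    (h1 : ⟪V 1, w⟫ = ⟪V 1, w'⟫)
    (hw : ∀ i, 1 ≤ i → i ≤ m - 1 → ⟪α i • V 1 - V (i + 1), w⟫ = 0)
    (hw' : ∀ i, 1 ≤ i → i ≤ m - 1 → ⟪α i • V 1 - V (i + 1), w'⟫ = 0) :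
    ∀ j ∈ Set.Icc 1 m, ⟪V j, w⟫ = ⟪V j, w'⟫ := by
  rintro j ⟨hj1, hjm⟩
  obtain rfl | hj := eq_or_lt_of_le hj1
  · exact h1
  obtain ⟨i, rfl⟩ : ∃ i, j = i + 1 := ⟨j - 1, by omega⟩
  have hi := hw i (by omega) (by omega)
  have hi' := hw' i (by omega) (by omega)
  rw [inner_sub_left, real_inner_smul_left, sub_eq_zero] at hi hi'
  rw [← hi, ← hi', h1]

end RealInnerProductSpace

theorem stmt9_general (k : ℕ) (δ : ℝ)
    (𝒱 : Set (EuclideanSpace ℝ (Fin k)))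
    (m : ℕ) (V : ℕ → EuclideanSpace ℝ (Fin k)) (α : ℕ → ℝ)
    (B : Submodule ℝ (EuclideanSpace ℝ (Fin k)))
    (hB : ∀ b ∈ B, ∀ s ∈ Submodule.span ℝ (V '' Set.Icc 1 m), ⟪b, s⟫ = 0)
    (hmem : ∀ v ∈ 𝒱, v ∈ Submodule.span ℝ (V '' Set.Icc 1 m) ⊔ B)
    (hproj : ∀ v ∈ 𝒱,
      ‖(B.orthogonalProjection v : EuclideanSpace ℝ (Fin k))‖ ≤ Real.sqrt k * δ)
    (w' : EuclideanSpace ℝ (Fin k))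
    (hw'1 : ⟪V 1, w'⟫ = 1)
    (hw'A : ∀ i, 1 ≤ i → i ≤ m - 1 → ⟪α i • V 1 - V (i + 1), w'⟫ = 0) :
    ∀ w : EuclideanSpace ℝ (Fin k),
      ⟪V 1, w⟫ = 1 →
      (∀ i, 1 ≤ i → i ≤ m - 1 → ⟪α i • V 1 - V (i + 1), w⟫ = 0) →
      (∀ b ∈ B, ⟪b, w⟫ = 0) →
      ∀ v ∈ 𝒱, |⟪w, v⟫ - ⟪w', v⟫| ≤ Real.sqrt k * δ * ‖w'‖ := by
  intro w hw1 hwA hwB v hv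
  have hSB : Submodule.span ℝ (V '' Set.Icc 1 m) ⟂ B :=
    Submodule.isOrtho_iff_inner_eq.mpr fun s hs b hb => by rw [real_inner_comm]; exact hB b hb s hs
  have hS : w - w' ∈ (Submodule.span ℝ (V '' Set.Icc 1 m))ᗮ :=
    Submodule.sub_mem_orthogonal_span_of_inner_eq <| Set.forall_mem_image.mpr <|
      inner_eq_of_inner_smul_sub_eq_zero (hw1.trans hw'1.symm) hwA hw'A
  have hwB' : w ∈ Bᗮ := (Submodule.mem_orthogonal B w).mpr hwB
  calc |⟪w, v⟫ - ⟪w', v⟫| ≤ ‖w'‖ * ‖B.starProjection v‖ :=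
        abs_inner_sub_inner_le_of_mem_sup hSB (hmem v hv) hS hwB'
    _ ≤ ‖w'‖ * (Real.sqrt k * δ) := by
        gcongr
        rw [Submodule.starProjection_apply]
        exact hproj v hv
    _ = Real.sqrt k * δ * ‖w'‖ := mul_comm _ _

/-- Lemma F.1: any solution w of the exact linear system that is
moreover orthogonal to B induces personalized values √k·δ·‖w′‖-close to those
of w′ on every attainable value vector v ∈ 𝒱. -/
theorem stmt9 (k : ℕ) (hk : 1 ≤ k) (δ : ℝ) (hδ : 0 ≤ δ)
    (𝒱 : Set (EuclideanSpace ℝ (Fin k)))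
    (m : ℕ) (V : ℕ → EuclideanSpace ℝ (Fin k)) (α : ℕ → ℝ)
    (B : Submodule ℝ (EuclideanSpace ℝ (Fin k)))
    (hB : ∀ b ∈ B, ∀ s ∈ Submodule.span ℝ (V '' Set.Icc 1 m), ⟪b, s⟫ = 0)
    (hmem : ∀ v ∈ 𝒱, v ∈ Submodule.span ℝ (V '' Set.Icc 1 m) ⊔ B)
    (hproj : ∀ v ∈ 𝒱,
      ‖(B.orthogonalProjection v : EuclideanSpace ℝ (Fin k))‖ ≤ Real.sqrt k * δ)
    (w' : EuclideanSpace ℝ (Fin k))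
    (hw'1 : ⟪V 1, w'⟫ = 1)
    (hw'A : ∀ i, 1 ≤ i → i ≤ m - 1 → ⟪α i • V 1 - V (i + 1), w'⟫ = 0) :
    ∀ w : EuclideanSpace ℝ (Fin k),
      ⟪V 1, w⟫ = 1 →
      (∀ i, 1 ≤ i → i ≤ m - 1 → ⟪α i • V 1 - V (i + 1), w⟫ = 0) →
      (∀ b ∈ B, ⟪b, w⟫ = 0) →
      ∀ v ∈ 𝒱, |⟪w, v⟫ - ⟪w', v⟫| ≤ Real.sqrt k * δ * ‖w'‖ :=
  stmt9_general k δ 𝒱 m V α B hB hmem hproj w' hw'1 hw'A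
end

section
/- There is an absolute constant C > 0 (independent of all parameters) such that, under the stated setup and assumptions, |⟨ŵ, v⟩ − ⟨ŵ^{(δ)}, v⟩| ≤ C·(√k + 1)^{d − d_δ}·C_α·ε^{(δ)} for every v ∈ 𝒱. -/
/-!
Pair the difference `ŵ - ŵ^{(δ)}` with the basis vectors: both vectors solve the same equations
for `i ≤ d_δ`, so `⟨Vᵢ, ŵ - ŵ^{(δ)}⟩ = 0` there, while for `i > d_δ` the pairing is
`α̂ᵢ - ⟨Vᵢ, ŵ^{(δ)}⟩ = (α̂ᵢ - αᵢ) + (⟨w', Vᵢ⟩ - ⟨ŵ^{(δ)}, Vᵢ⟩)`, of size at most `2 C_α ε^{(δ)}`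
(either `δ ≤ C_V` and `ε_α ≤ ε^{(δ)}`, or `δ > C_V` and `ε^{(δ)} ≥ 1`). Writing
`v = ∑ cⱼ Vⱼ`, pairing with `ψᵢ` gives an upper triangular system for the `cⱼ` whose back
substitution yields `|cᵢ| ≤ √k (√k + 1)^{d - i}`, and summing these over `i > d_δ` gives the
geometric factor `(√k + 1)^{d - d_δ}`.
-/

open scoped RealInnerProductSpace
open Finset

lemma mul_sum_Ioc_pow_sub {R : Type*} [CommRing R] (x : R) {i d : ℕ} (hid : i ≤ d) :
    (x - 1) * ∑ j ∈ Ioc i d, x ^ (d - j) = x ^ (d - i) - 1 := by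
  rw [← mul_geom_sum]
  congr 1
  refine sum_nbij' (fun j => d - j) (fun k => d - k) ?_ ?_ ?_ ?_ ?_ <;> intro j hj <;>
    simp only [mem_Ioc, mem_range] at hj ⊢ <;> omega

/-- Back substitution: `|cᵢ| ≤ s + ∑_{i < j ≤ d} s · s (s + 1)^{d - j} = s (s + 1)^{d - i}`. -/
theorem abs_le_of_upper_triangular {m d : ℕ} {s : ℝ} {a : ℕ → ℕ → ℝ} {b c : ℕ → ℝ}
    (hsys : ∀ i, m < i → i ≤ d → ∑ j ∈ Icc i d, a i j * c j = b i)
    (hdiag : ∀ i, m < i → i ≤ d → a i i ≠ 0)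
    (hoff : ∀ i, m < i → i ≤ d → ∀ j ∈ Ioc i d, |a i j| ≤ s * |a i i|)
    (hb : ∀ i, m < i → i ≤ d → |b i| ≤ s * |a i i|) :
    ∀ i, m < i → i ≤ d → |c i| ≤ s * (s + 1) ^ (d - i) := by
  intro i hmi hid
  induction hn : d - i using Nat.strong_induction_on generalizing i with
  | _ n ih =>
  subst hn
  have htail : ∀ j ∈ Ioc i d, |c j| ≤ s * (s + 1) ^ (d - j) := fun j hj => by
    rw [mem_Ioc] at hj
    exact ih (d - j) (by omega) j (by omega) hj.2 rfl
  have hρ : 0 < |a i i| := abs_pos.mpr (hdiag i hmi hid)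
  have hci : a i i * c i = b i - ∑ j ∈ Ioc i d, a i j * c j := by
    rw [← hsys i hmi hid, ← add_sum_Ioc_eq_sum_Icc hid]
    ring
  have hs : 0 ≤ s := (mul_nonneg_iff_of_pos_right hρ).mp ((abs_nonneg _).trans (hb i hmi hid))
  have hgeom := mul_sum_Ioc_pow_sub (s + 1) hid
  rw [add_sub_cancel_right] at hgeom
  refine le_of_mul_le_mul_left ?_ hρ
  calc |a i i| * |c i| = |b i - ∑ j ∈ Ioc i d, a i j * c j| := by rw [← hci, abs_mul]
    _ ≤ |b i| + |∑ j ∈ Ioc i d, a i j * c j| := abs_sub _ _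
    _ ≤ |b i| + ∑ j ∈ Ioc i d, |a i j| * |c j| := by
        gcongr
        simpa only [abs_mul] using abs_sum_le_sum_abs (fun j => a i j * c j) (Ioc i d)
    _ ≤ s * |a i i| + ∑ j ∈ Ioc i d, s * |a i i| * (s * (s + 1) ^ (d - j)) := by
        gcongr with j hj
        · exact hb i hmi hid
        · exact hoff i hmi hid j hj
        · exact htail j hj
    _ = |a i i| * (s * (s + 1) ^ (d - i)) := by
        rw [← mul_sum, ← mul_sum, hgeom]
        ring

lemma abs_sum_mul_le_of_geometric {m d : ℕ} {s B : ℝ} {c f : ℕ → ℝ} (hmd : m ≤ d)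
    (hB : 0 ≤ B) (hc : ∀ j, m < j → j ≤ d → |c j| ≤ s * (s + 1) ^ (d - j))
    (hf : ∀ j ∈ Ioc m d, |f j| ≤ B) :
    |∑ j ∈ Ioc m d, c j * f j| ≤ B * (s + 1) ^ (d - m) := by
  have hgeom := mul_sum_Ioc_pow_sub (s + 1) hmd
  rw [add_sub_cancel_right] at hgeom
  calc |∑ j ∈ Ioc m d, c j * f j| ≤ ∑ j ∈ Ioc m d, |c j| * |f j| := by
        simpa only [abs_mul] using abs_sum_le_sum_abs (fun j => c j * f j) (Ioc m d)
    _ ≤ ∑ j ∈ Ioc m d, s * (s + 1) ^ (d - j) * B := by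
        gcongr with j hj
        all_goals obtain ⟨hmj, hjd⟩ := mem_Ioc.mp hj
        · exact (abs_nonneg _).trans (hc j hmj hjd)
        · exact hc j hmj hjd
        · exact hf j hj
    _ = B * ((s + 1) ^ (d - m) - 1) := by
        rw [← sum_mul, ← mul_sum, hgeom, mul_comm]
    _ ≤ B * (s + 1) ^ (d - m) := by linarith

lemma min_le_errorBound {Cα CV D W εα δ s : ℝ} (hCα : 1 ≤ Cα) (hD : 1 ≤ D) (hs : 1 ≤ s)
    (hεα : 0 ≤ εα) (hδ : 0 < δ) (hW : 0 ≤ W) (hCVW : 1 ≤ CV * W) :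
    min εα 1 ≤ Cα * CV ^ 4 * D * W ^ 2 * εα / δ ^ 2 + s * δ * W := by
  rcases le_or_gt δ CV with hδCV | hCVδ
  · have hCV : 0 ≤ CV := hδ.le.trans hδCV
    have hδ2 : δ ^ 2 ≤ Cα * CV ^ 4 * D * W ^ 2 := calc
      δ ^ 2 ≤ CV ^ 2 * 1 := by rw [mul_one]; exact pow_le_pow_left₀ hδ.le hδCV 2
      _ ≤ CV ^ 2 * (CV * W) ^ 2 := by gcongr; exact one_le_pow₀ hCVW
      _ ≤ Cα * D * (CV ^ 2 * (CV * W) ^ 2) := le_mul_of_one_le_left (by positivity) (by nlinarith)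
      _ = Cα * CV ^ 4 * D * W ^ 2 := by ring
    have : εα ≤ Cα * CV ^ 4 * D * W ^ 2 * εα / δ ^ 2 := by
      rw [le_div_iff₀ (by positivity)]
      nlinarith
    have : 0 ≤ s * δ * W := by positivity
    linarith [min_le_left εα 1]
  · have hCV : 0 ≤ CV := by nlinarith
    have : 0 ≤ Cα * CV ^ 4 * D * W ^ 2 * εα / δ ^ 2 := by
      have : 0 ≤ Cα := by linarith
      have : 0 ≤ D := by linarith
      positivity
    have : 1 ≤ s * δ * W := by nlinarith [mul_le_mul_of_nonneg_right hCVδ.le hW]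
    linarith [min_le_right εα 1]

lemma abs_sub_le_mul_min_one {a b C ε : ℝ} (ha : a ∈ Set.Icc 0 C) (hb : b ∈ Set.Icc 0 C)
    (hab : |a - b| ≤ ε) (hC : 1 ≤ C) : |a - b| ≤ C * min ε 1 := by
  have hC' : |a - b| ≤ C := abs_sub_le_of_nonneg_of_le ha.1 ha.2 hb.1 hb.2
  rcases min_cases ε 1 with ⟨h, -⟩ | ⟨h, -⟩ <;> rw [h]
  · nlinarith [abs_nonneg (a - b)]
  · linarith

section InnerProduct

variable {E : Type*} [NormedAddCommGroup E] [InnerProductSpace ℝ E]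

lemma one_le_mul_norm_of_inner_eq_one {x w : E} {C : ℝ} (hx : ‖x‖ ≤ C) (h : ⟪x, w⟫ = 1) :
    1 ≤ C * ‖w‖ :=
  h ▸ (real_inner_le_norm x w).trans (mul_le_mul_of_nonneg_right hx (norm_nonneg w))

lemma inner_sum_smul_eq_sum_of_subset {V : ℕ → E} {c : ℕ → ℝ} {w : E} {s t : Finset ℕ}
    (hst : s ⊆ t) (h : ∀ j ∈ t, j ∉ s → ⟪V j, w⟫ = 0) :
    ⟪∑ j ∈ t, c j • V j, w⟫ = ∑ j ∈ s, c j * ⟪V j, w⟫ := by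
  simp only [sum_inner, real_inner_smul_left]
  exact (sum_subset hst fun j hj hjs => by rw [h j hj hjs, mul_zero]).symm

theorem abs_coeff_le_of_triangular_duals {V ψ : ℕ → E} {c : ℕ → ℝ} {𝒱 : Set E} {m d : ℕ}
    {s : ℝ} (hV : ∀ j, m < j → j ≤ d → V j ∈ 𝒱) (hv : ∑ j ∈ Icc 1 d, c j • V j ∈ 𝒱)
    (horth : ∀ i, m < i → i ≤ d → ∀ j, 1 ≤ j → j < i → ⟪ψ i, V j⟫ = 0)
    (hdiag : ∀ i, m < i → i ≤ d → ⟪V i, ψ i⟫ ≠ 0)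
    (hbound : ∀ i, m < i → i ≤ d → ∀ u ∈ 𝒱, |⟪u, ψ i⟫| ≤ s * |⟪V i, ψ i⟫|) :
    ∀ i, m < i → i ≤ d → |c i| ≤ s * (s + 1) ^ (d - i) := by
  refine abs_le_of_upper_triangular (a := fun i j => ⟪V j, ψ i⟫) (fun i hmi hid => ?_) hdiag
    (fun i hmi hid j hj => ?_) (fun i hmi hid => hbound i hmi hid _ hv)
  · simp only [mul_comm _ (c _)]
    refine (inner_sum_smul_eq_sum_of_subset (Icc_subset_Icc_left ?_) fun j hj hji => ?_).symm
    · omega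
    · simp only [mem_Icc] at hj hji
      rw [real_inner_comm]
      exact horth i hmi hid j hj.1 (by omega)
  · rw [mem_Ioc] at hj
    exact hbound i hmi hid _ (hV j (by omega) hj.2)

def SolvesSystem (V : ℕ → E) (β : ℕ → ℝ) (n : ℕ) (x : E) : Prop :=
  ⟪V 1, x⟫ = 1 ∧ ∀ i, 2 ≤ i → i ≤ n → ⟪β i • V 1 - V i, x⟫ = 0

namespace SolvesSystem

variable {V : ℕ → E} {β γ : ℕ → ℝ} {n m i : ℕ} {x w : E}

lemma inner_eq (h : SolvesSystem V β n x) (hi : 2 ≤ i) (hin : i ≤ n) : ⟪V i, x⟫ = β i := by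
  have := h.2 i hi hin
  rw [inner_sub_left, real_inner_smul_left, h.1] at this
  linarith

lemma inner_sub_eq_zero (hx : SolvesSystem V β n x) (hw : SolvesSystem V β m w) (hi : 1 ≤ i)
    (hin : i ≤ n) (him : i ≤ m) : ⟪V i, x - w⟫ = 0 := by
  rw [inner_sub_right, sub_eq_zero]
  rcases hi.eq_or_lt with rfl | hi
  · rw [hx.1, hw.1]
  · rw [hx.inner_eq hi hin, hw.inner_eq hi him]

lemma abs_inner_sub_le (hx : SolvesSystem V β n x) (hw : SolvesSystem V γ n w) (hi : 2 ≤ i)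
    (hin : i ≤ n) (y : E) : |⟪V i, x - y⟫| ≤ |β i - γ i| + |⟪y, V i⟫ - ⟪w, V i⟫| := by
  rw [inner_sub_right, hx.inner_eq hi hin, real_inner_comm (V i) y, real_inner_comm (V i) w,
    hw.inner_eq hi hin, abs_sub_comm ⟪V i, y⟫ (γ i)]
  exact abs_sub_le (β i) (γ i) ⟪V i, y⟫

end SolvesSystem

end InnerProduct

/-- Lemma 3.4: there is an absolute constant C > 0 such that,
under the stated setup, any solution ŵ of the full estimated system and the
minimum-norm solution ŵ^{(δ)} of the truncated estimated system satisfy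
|⟨ŵ, v⟩ − ⟨ŵ^{(δ)}, v⟩| ≤ C·(√k + 1)^{d − d_δ}·C_α·ε^{(δ)} for every v ∈ 𝒱. -/
theorem stmt12 : ∃ C : ℝ, 0 < C ∧
    ∀ (k : ℕ), 1 ≤ k →
    ∀ (𝒱 : Set (EuclideanSpace ℝ (Fin k))), 𝒱.Nonempty →
    ∀ (CV : ℝ), 1 ≤ CV → (∀ v ∈ 𝒱, ‖v‖ ≤ CV) →
    ∀ (d dδ : ℕ), 1 ≤ dδ → dδ ≤ d → d ≤ k →
    ∀ (V : ℕ → EuclideanSpace ℝ (Fin k)), (∀ i, 1 ≤ i → i ≤ d → V i ∈ 𝒱) →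
    ∀ (Cα εα δ : ℝ), 1 ≤ Cα → 0 ≤ εα → 0 < δ →
    ∀ (α αhat : ℕ → ℝ),
      (∀ i, 2 ≤ i → i ≤ d → α i ∈ Set.Icc 0 Cα) →
      (∀ i, 2 ≤ i → i ≤ d → αhat i ∈ Set.Icc 0 Cα) →
      (∀ i, 2 ≤ i → i ≤ d → |αhat i - α i| ≤ εα) →
    ∀ (u : ℕ → EuclideanSpace ℝ (Fin k)),
      (∀ i, 2 ≤ i → i ≤ dδ → ‖u i‖ = 1) →
      (∀ i, 2 ≤ i → i ≤ dδ → ∀ j, 1 ≤ j → j < i → ⟪u i, V j⟫ = 0) →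
      (∀ i, 2 ≤ i → i ≤ dδ → δ ≤ |⟪V i, u i⟫|) →
    LinearIndependent ℝ (fun i : Fin d => V (i.val + 1)) →
    (∀ v ∈ 𝒱, v ∈ Submodule.span ℝ (V '' Set.Icc 1 d)) →
    ∀ (ψ : ℕ → EuclideanSpace ℝ (Fin k)),
      (∀ i, dδ < i → i ≤ d → ‖ψ i‖ = 1) →
      (∀ i, dδ < i → i ≤ d → ψ i ∈ Submodule.span ℝ (V '' Set.Icc 1 i)) →
      (∀ i, dδ < i → i ≤ d → ∀ j, 1 ≤ j → j < i → ⟪ψ i, V j⟫ = 0) →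
      (∀ i, dδ < i → i ≤ d → 0 < ⟪V i, ψ i⟫) →
      (∀ i, dδ < i → i ≤ d → ∀ v ∈ 𝒱, |⟪v, ψ i⟫| ≤ Real.sqrt k * |⟪V i, ψ i⟫|) →
    (∀ v ∈ 𝒱,
      ‖v - (Submodule.orthogonalProjection (Submodule.span ℝ (V '' Set.Icc 1 dδ)) v :
        EuclideanSpace ℝ (Fin k))‖ ≤ Real.sqrt k * δ) →
    ∀ (w' : EuclideanSpace ℝ (Fin k)),
      ⟪V 1, w'⟫ = 1 →
      (∀ i, 2 ≤ i → i ≤ d → ⟪α i • V 1 - V i, w'⟫ = 0) →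
    ∀ (εδ : ℝ),
      εδ = Cα * CV ^ 4 * (dδ : ℝ) ^ ((3 : ℝ) / 2) * ‖w'‖ ^ 2 * εα / δ ^ 2
        + Real.sqrt k * δ * ‖w'‖ →
    ∀ (whatδ : EuclideanSpace ℝ (Fin k)),
      (⟪V 1, whatδ⟫ = 1 ∧ ∀ i, 2 ≤ i → i ≤ dδ → ⟪αhat i • V 1 - V i, whatδ⟫ = 0) →
      (∀ x : EuclideanSpace ℝ (Fin k),
        (⟪V 1, x⟫ = 1 ∧ ∀ i, 2 ≤ i → i ≤ dδ → ⟪αhat i • V 1 - V i, x⟫ = 0) →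
        ‖whatδ‖ ≤ ‖x‖) →
      ‖whatδ‖ ≤ (3 / 2) * ‖w'‖ →
      (∀ v ∈ 𝒱, |⟪whatδ, v⟫ - ⟪w', v⟫| ≤ εδ) →
    ∀ (what : EuclideanSpace ℝ (Fin k)),
      (⟪V 1, what⟫ = 1 ∧ ∀ i, 2 ≤ i → i ≤ d → ⟪αhat i • V 1 - V i, what⟫ = 0) →
    ∀ v ∈ 𝒱,
      |⟪what, v⟫ - ⟪whatδ, v⟫| ≤
        C * (Real.sqrt k + 1) ^ (d - dδ) * Cα * εδ := by
  refine ⟨2, two_pos, ?_⟩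
  intro k hk 𝒱 _ CV _ hCV d dδ hdδ hdδd _ V hV Cα εα δ hCα hεα hδ α αhat hα hαhat hαε
    u _ _ _ _ hVspan ψ _ _ hψorth hψpos hψbd _ w' hw'1 hw'α εδ hεδ whatδ hwδ _ _ hwδv what hw v hv
  have hw' : SolvesSystem V α d w' := ⟨hw'1, hw'α⟩
  obtain ⟨c, rfl⟩ := (Submodule.mem_span_image_finset_iff_exists_fun' ℝ (s := Icc 1 d)).mp
    (by rw [coe_Icc]; exact hVspan v hv)
  have hs : 1 ≤ √(k : ℝ) := Real.one_le_sqrt.mpr (by exact_mod_cast hk)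
  have hεδ_min : min εα 1 ≤ εδ := hεδ ▸ min_le_errorBound hCα
    (Real.one_le_rpow (by exact_mod_cast hdδ) (by norm_num)) hs hεα hδ (norm_nonneg w')
    (one_le_mul_norm_of_inner_eq_one (hCV _ (hV 1 le_rfl (hdδ.trans hdδd))) hw'1)
  have hεδ0 : 0 ≤ εδ := (le_min hεα zero_le_one).trans hεδ_min
  have hhigh : ∀ j ∈ Ioc dδ d, |⟪V j, what - whatδ⟫| ≤ 2 * Cα * εδ := fun j hj => by
    rw [mem_Ioc] at hj
    have h2 : 2 ≤ j := by omega
    calc _ ≤ |αhat j - α j| + |⟪whatδ, V j⟫ - ⟪w', V j⟫| :=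
          SolvesSystem.abs_inner_sub_le hw hw' h2 hj.2 whatδ
      _ ≤ Cα * εδ + εδ := add_le_add
          ((abs_sub_le_mul_min_one (hαhat j h2 hj.2) (hα j h2 hj.2) (hαε j h2 hj.2) hCα).trans
            (by gcongr)) (hwδv _ (hV j (by omega) hj.2))
      _ ≤ 2 * Cα * εδ := by nlinarith
  rw [← inner_sub_left, real_inner_comm, inner_sum_smul_eq_sum_of_subset (s := Ioc dδ d)
    (fun j hj => by simp only [mem_Icc, mem_Ioc] at hj ⊢; omega) fun j hj hjδ => ?_]
  · calc _ ≤ 2 * Cα * εδ * (√k + 1) ^ (d - dδ) :=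
          abs_sum_mul_le_of_geometric hdδd (by positivity)
            (abs_coeff_le_of_triangular_duals (fun j hj hjd => hV j (by omega) hjd) hv hψorth
              (fun i hi hid => (hψpos i hi hid).ne') hψbd) hhigh
      _ = _ := by ring
  · simp only [mem_Icc, mem_Ioc, not_and, not_le] at hj hjδ
    exact SolvesSystem.inner_sub_eq_zero (n := d) hw hwδ hj.1 hj.2 (by omega)
end

section
/- Let S be a finite set, s₀ ∈ S, H ≥ 1, and for each t ∈ {0,…,H−1} let f_t : S × S → ℝ be nonnegative. Assume f_0(s, s′) = 0 whenever s ≠ s₀, Σ_{s′∈S} f_0(s₀, s′) = 1, and the conservation law Σ_{s′∈S} f_t(s, s′) = Σ_{s″∈S} f_{t−1}(s″, s) for every t ∈ {1,…,H−1} and s ∈ S. Call a function τ : {0,…,H} → S with τ(0) = s₀ a trajectory. Then there is a nonnegative weight function c on trajectories such that: (i) c(τ) > 0 for at most |{(t, s, s′) : f_t(s, s′) > 0}| trajectories; (ii) Σ_τ c(τ) = 1; and (iii) f_t(s, s′) = Σ_{τ : τ(t) = s, τ(t+1) = s′} c(τ) for every t ∈ {0,…,H−1} and s, s′ ∈ S.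 Consequently, for every k ≥ 1 and R : S → ℝ^k, setting Φ(τ) := Σ_{t=0}^{H−1} R(τ(t)), one has Σ_τ c(τ)·Φ(τ) = Σ_{t=0}^{H−1} Σ_{(s,s′)∈S×S} f_t(s, s′)·R(s). -/
/-!
Peel off one trajectory at a time. Starting at `s₀` and always following an edge of positive
flow gives a trajectory, because conservation makes the outflow of a vertex reached through a
positive edge positive. Subtracting its bottleneck value `ε` along it leaves a flow of mass
`m - ε` in which that bottleneck edge has become zero, so induction on the number of positive
edges yields at most that many trajectories. The return identity only regroups
`∑ τ, c τ • Φ τ` according to the edge a trajectory uses at each time.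
-/

open Finset

theorem Finset.exists_pos_of_sum_pos {ι M : Type*} [AddCommMonoid M] [LinearOrder M]
    [IsOrderedAddMonoid M] {s : Finset ι} {g : ι → M} (h : 0 < ∑ i ∈ s, g i) : ∃ i, 0 < g i := by
  by_contra! hg
  exact h.not_ge (sum_nonpos fun i _ => hg i)

theorem Finset.card_filter_pos_add_single_le {α : Type*} [Fintype α] [DecidableEq α]
    (c : α → ℝ) (a : α) (ε : ℝ) :
    #{x | 0 < (c + Pi.single a ε : α → ℝ) x} ≤ #{x | 0 < c x} + 1 := by
  refine (card_le_card fun x hx => ?_).trans (card_insert_le a _)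
  by_cases h : x = a
  · simp [h]
  · simp_all

section

variable {S : Type*} [Fintype S]

/-- `f t s s'` is the flow on the edge from `(t, s)` to `(t + 1, s')`; only the layers `t < H`
are constrained. -/
structure IsLayeredFlow (s₀ : S) (H : ℕ) (f : ℕ → S → S → ℝ) (m : ℝ) : Prop where
  nonneg : ∀ t, t < H → ∀ s s', 0 ≤ f t s s'
  source : ∀ s s', s ≠ s₀ → f 0 s s' = 0
  mass : ∑ s', f 0 s₀ s' = m
  cons : ∀ t, 1 ≤ t → t < H → ∀ s, ∑ s', f t s s' = ∑ s'', f (t - 1) s'' s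

noncomputable def posEdges (f : ℕ → S → S → ℝ) (H : ℕ) : Finset (ℕ × S × S) :=
  (range H ×ˢ (univ : Finset (S × S))).filter fun p => 0 < f p.1 p.2.1 p.2.2

open Classical in
noncomputable def greedyPath (f : ℕ → S → S → ℝ) (s₀ : S) : ℕ → S
  | 0 => s₀
  | t + 1 => if h : ∃ s', 0 < f t (greedyPath f s₀ t) s' then h.choose else greedyPath f s₀ t

variable {s₀ : S} {H : ℕ} {f : ℕ → S → S → ℝ} {m : ℝ}

theorem greedyPath_pos_of_exists {t : ℕ} (h : ∃ s', 0 < f t (greedyPath f s₀ t) s') :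
    0 < f t (greedyPath f s₀ t) (greedyPath f s₀ (t + 1)) := by
  rw [greedyPath.eq_2, dif_pos h]
  exact h.choose_spec

namespace IsLayeredFlow

theorem sum_layer (hf : IsLayeredFlow s₀ H f m) : ∀ t < H, ∑ s, ∑ s', f t s s' = m
  | 0, _ => by
    rw [sum_eq_single s₀ (fun s _ hs => sum_eq_zero fun s' _ => hf.source s s' hs) (by simp),
      hf.mass]
  | t + 1, ht => calc
      ∑ s, ∑ s', f (t + 1) s s' = ∑ s, ∑ s'', f t s'' s :=
        sum_congr rfl fun s _ => by simpa using hf.cons (t + 1) (by omega) ht s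
      _ = m := by rw [sum_comm]; exact hf.sum_layer t (by omega)

theorem mass_pos (hf : IsLayeredFlow s₀ H f m) {e : ℕ × S × S} (he : e ∈ posEdges f H) :
    0 < m := by
  obtain ⟨t, s, s'⟩ := e
  simp only [posEdges, mem_filter, mem_product, mem_range, mem_univ, and_true] at he
  rw [← hf.sum_layer t he.1]
  calc 0 < f t s s' := he.2
    _ ≤ ∑ s', f t s s' := single_le_sum (fun s' _ => hf.nonneg t he.1 s s') (mem_univ s')
    _ ≤ ∑ s, ∑ s', f t s s' :=
      single_le_sum (fun s _ => sum_nonneg fun s' _ => hf.nonneg t he.1 s s') (mem_univ s)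

theorem eq_zero_of_posEdges_eq_empty (hf : IsLayeredFlow s₀ H f m) (hH : 0 < H)
    (hE : posEdges f H = ∅) : m = 0 ∧ ∀ t < H, ∀ s s', f t s s' = 0 := by
  have hzero : ∀ t < H, ∀ s s', f t s s' = 0 := fun t ht s s' =>
    ((hf.nonneg t ht s s').eq_of_not_lt fun hpos => by
      simpa [hE] using (show (t, s, s') ∈ posEdges f H by simp [posEdges, ht, hpos])).symm
  refine ⟨?_, hzero⟩
  rw [← hf.mass]
  exact sum_eq_zero fun s' _ => hzero 0 hH s₀ s'

theorem greedyPath_pos (hf : IsLayeredFlow s₀ H f m) (hm : 0 < m) :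
    ∀ t < H, 0 < f t (greedyPath f s₀ t) (greedyPath f s₀ (t + 1))
  | 0, _ => greedyPath_pos_of_exists <| exists_pos_of_sum_pos (hf.mass ▸ hm)
  | t + 1, ht => greedyPath_pos_of_exists <| by
    have hout : 0 < ∑ s', f (t + 1) (greedyPath f s₀ (t + 1)) s' := by
      rw [hf.cons (t + 1) (by omega) ht, Nat.add_sub_cancel]
      exact (hf.greedyPath_pos hm t (by omega)).trans_le
        (single_le_sum (fun s'' _ => hf.nonneg t (by omega) s'' _) (mem_univ _))
    exact exists_pos_of_sum_pos hout

theorem exists_bottleneckPath (hf : IsLayeredFlow s₀ H f m) (hH : 0 < H) (hm : 0 < m) :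
    ∃ g : ℕ → S, g 0 = s₀ ∧ ∃ ε, 0 < ε ∧ (∀ t < H, ε ≤ f t (g t) (g (t + 1))) ∧
      ∃ t < H, f t (g t) (g (t + 1)) = ε := by
  have hrange : (range H).Nonempty := nonempty_range_iff.2 hH.ne'
  obtain ⟨t, ht, hbottleneck⟩ := exists_mem_eq_inf' hrange
    fun t => f t (greedyPath f s₀ t) (greedyPath f s₀ (t + 1))
  exact ⟨greedyPath f s₀, rfl, _,
    (lt_inf'_iff _).2 fun t ht => hf.greedyPath_pos hm t (mem_range.1 ht),
    fun t ht => inf'_le _ (mem_range.2 ht), t, mem_range.1 ht, hbottleneck.symm⟩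

end IsLayeredFlow

variable [DecidableEq S]

def pathFlow (g : ℕ → S) (ε : ℝ) (t : ℕ) (s s' : S) : ℝ :=
  if g t = s ∧ g (t + 1) = s' then ε else 0

theorem sum_pathFlow_out (g : ℕ → S) (ε : ℝ) (t : ℕ) (s : S) :
    ∑ s', pathFlow g ε t s s' = if g t = s then ε else 0 := by
  by_cases h : g t = s <;> simp [pathFlow, h]

theorem sum_pathFlow_in (g : ℕ → S) (ε : ℝ) (t : ℕ) (s : S) :
    ∑ s'', pathFlow g ε t s'' s = if g (t + 1) = s then ε else 0 := by
  by_cases h : g (t + 1) = s <;> simp [pathFlow, h]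

theorem IsLayeredFlow.sub_pathFlow (hf : IsLayeredFlow s₀ H f m) {g : ℕ → S} (hg : g 0 = s₀)
    {ε : ℝ} (hε : ∀ t < H, ε ≤ f t (g t) (g (t + 1))) :
    IsLayeredFlow s₀ H (f - pathFlow g ε) (m - ε) where
  nonneg t ht s s' := by
    simp only [Pi.sub_apply, pathFlow, sub_nonneg]
    split_ifs with h
    · obtain ⟨rfl, rfl⟩ := h
      exact hε t ht
    · exact hf.nonneg t ht s s'
  source s s' hs := by simp [pathFlow, hf.source s s' hs, hg, Ne.symm hs]
  mass := by simp [sum_sub_distrib, sum_pathFlow_out, hf.mass, hg]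
  cons t ht₁ ht s := by
    obtain ⟨t, rfl⟩ := Nat.exists_eq_add_of_le' ht₁
    simp [sum_sub_distrib, sum_pathFlow_out, sum_pathFlow_in, hf.cons (t + 1) ht₁ ht s]

theorem posEdges_sub_pathFlow_ssubset {g : ℕ → S} {ε : ℝ} (hε : 0 < ε) {t : ℕ} (ht : t < H)
    (hbottleneck : f t (g t) (g (t + 1)) = ε) : posEdges (f - pathFlow g ε) H ⊂ posEdges f H := by
  have hpath_nonneg : ∀ t s s', 0 ≤ pathFlow g ε t s s' := fun t s s' => by
    unfold pathFlow; split_ifs <;> simp [hε.le]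
  rw [ssubset_iff_of_subset]
  · refine ⟨(t, g t, g (t + 1)), ?_, ?_⟩ <;> simp [posEdges, ht, hbottleneck, hε, pathFlow]
  · intro e he
    simp only [posEdges, mem_filter, Pi.sub_apply] at he ⊢
    exact ⟨he.1, by linarith [he.2, hpath_nonneg e.1 e.2.1 e.2.2]⟩

def inducedFlow (c : (Fin (H + 1) → S) → ℝ) (t : Fin H) (s s' : S) : ℝ :=
  ∑ τ ∈ univ.filter (fun τ : Fin (H + 1) → S => τ t.castSucc = s ∧ τ t.succ = s'), c τ

theorem inducedFlow_add_single (c : (Fin (H + 1) → S) → ℝ) (τ₀ : Fin (H + 1) → S)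
    (ε : ℝ) (t : Fin H) (s s' : S) :
    inducedFlow (c + Pi.single τ₀ ε) t s s' =
      inducedFlow c t s s' + if τ₀ t.castSucc = s ∧ τ₀ t.succ = s' then ε else 0 := by
  simp [inducedFlow, sum_add_distrib, sum_pi_single']

theorem IsLayeredFlow.exists_decomposition (hf : IsLayeredFlow s₀ H f m) (hH : 0 < H) :
    ∃ c : (Fin (H + 1) → S) → ℝ, (∀ τ, 0 ≤ c τ) ∧ (∀ τ, τ 0 ≠ s₀ → c τ = 0) ∧
      #{τ | 0 < c τ} ≤ #(posEdges f H) ∧ ∑ τ, c τ = m ∧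
      ∀ (t : Fin H) s s', f t s s' = inducedFlow c t s s' := by
  induction hn : #(posEdges f H) using Nat.strong_induction_on generalizing f m with
  | _ n ih =>
  subst hn
  rcases (posEdges f H).eq_empty_or_nonempty with hE | ⟨e, he⟩
  · obtain ⟨rfl, hzero⟩ := hf.eq_zero_of_posEdges_eq_empty hH hE
    exact ⟨0, fun _ => le_rfl, fun _ _ => rfl, by simp, by simp,
      fun t s s' => by simp [hzero t t.isLt, inducedFlow]⟩
  obtain ⟨g, hg, ε, hε_pos, hε_le, t₀, ht₀, hbottleneck⟩ :=
    hf.exists_bottleneckPath hH (hf.mass_pos he)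
  have hss := posEdges_sub_pathFlow_ssubset hε_pos ht₀ hbottleneck
  obtain ⟨c, hc_nonneg, hc_start, hc_card, hc_sum, hc_flow⟩ :=
    ih _ (card_lt_card hss) (hf.sub_pathFlow hg hε_le) rfl
  let τ₀ : Fin (H + 1) → S := fun i => g i
  refine ⟨c + Pi.single τ₀ ε, fun τ => ?_, fun τ hτ => ?_, ?_, ?_, fun t s s' => ?_⟩
  · have hsingle : (0 : (Fin (H + 1) → S) → ℝ) ≤ Pi.single τ₀ ε := Pi.single_nonneg.2 hε_pos.le
    exact add_nonneg (hc_nonneg τ) (hsingle τ)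
  · have h : τ ≠ τ₀ := by
      rintro rfl
      exact hτ hg
    simp [hc_start τ hτ, h]
  · refine (card_filter_pos_add_single_le c τ₀ ε).trans ?_
    have := card_lt_card hss
    omega
  · simp [sum_add_distrib, hc_sum]
  · rw [inducedFlow_add_single, ← hc_flow]
    exact (sub_add_cancel (f t s s') (pathFlow g ε t s s')).symm

theorem sum_smul_comp_castSucc_eq_sum_inducedFlow_smul {M : Type*} [AddCommMonoid M]
    [Module ℝ M] (c : (Fin (H + 1) → S) → ℝ) (R : S → M) (t : Fin H) :
    ∑ τ : Fin (H + 1) → S, c τ • R (τ t.castSucc) = ∑ s, ∑ s', inducedFlow c t s s' • R s := by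
  simp only [inducedFlow, sum_filter, sum_smul, ite_smul, zero_smul]
  calc _ = ∑ τ : Fin (H + 1) → S, ∑ s, ∑ s',
        if τ t.castSucc = s ∧ τ t.succ = s' then c τ • R s else 0 :=
        sum_congr rfl fun τ _ => by simp [ite_and]
    _ = _ := by
      rw [sum_comm]
      exact sum_congr rfl fun s _ => sum_comm

theorem sum_smul_sum_castSucc_eq_sum_inducedFlow_smul {M : Type*} [AddCommMonoid M]
    [Module ℝ M] (c : (Fin (H + 1) → S) → ℝ) (R : S → M) :
    ∑ τ : Fin (H + 1) → S, c τ • ∑ t : Fin H, R (τ t.castSucc) =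
      ∑ t : Fin H, ∑ s, ∑ s', inducedFlow c t s s' • R s := by
  simp_rw [smul_sum]
  rw [sum_comm]
  exact sum_congr rfl fun t _ => sum_smul_comp_castSucc_eq_sum_inducedFlow_smul c R t

end

/-- Theorem I.1, flow decomposition: a unit flow
(f_t)_{t<H} on the layered trajectory graph decomposes into at most
|{(t,s,s′) : f_t(s,s′) > 0}| weighted trajectories, and consequently the
weighted sum of trajectory returns equals the flow-weighted sum of rewards. -/
theorem stmt15 (S : Type*) [Fintype S] [DecidableEq S] (s₀ : S)
    (H : ℕ) (hH : 1 ≤ H) (f : ℕ → S → S → ℝ)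
    (hf_nonneg : ∀ t, t < H → ∀ s s', 0 ≤ f t s s')
    (hf0 : ∀ s s', s ≠ s₀ → f 0 s s' = 0)
    (hf0sum : ∑ s' : S, f 0 s₀ s' = 1)
    (hcons : ∀ t, 1 ≤ t → t < H → ∀ s : S,
      ∑ s' : S, f t s s' = ∑ s'' : S, f (t - 1) s'' s) :
    ∃ c : (Fin (H + 1) → S) → ℝ,
      (∀ τ, 0 ≤ c τ) ∧
      (∀ τ, τ 0 ≠ s₀ → c τ = 0) ∧
      (Finset.univ.filter fun τ : Fin (H + 1) → S => 0 < c τ).card ≤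
        ((Finset.range H ×ˢ (Finset.univ : Finset (S × S))).filter
          fun p => 0 < f p.1 p.2.1 p.2.2).card ∧
      (∑ τ : Fin (H + 1) → S, c τ = 1) ∧
      (∀ t : Fin H, ∀ s s' : S,
        f t s s' = ∑ τ ∈ Finset.univ.filter
          (fun τ : Fin (H + 1) → S => τ t.castSucc = s ∧ τ t.succ = s'), c τ) ∧
      (∀ k : ℕ, 1 ≤ k → ∀ R : S → EuclideanSpace ℝ (Fin k),
        ∑ τ : Fin (H + 1) → S, c τ • (∑ t : Fin H, R (τ t.castSucc)) =
          ∑ t : Fin H, ∑ s : S, ∑ s' : S, f t s s' • R s) := by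
  have hf : IsLayeredFlow s₀ H f 1 := ⟨hf_nonneg, hf0, hf0sum, hcons⟩
  obtain ⟨c, hc_nonneg, hc_start, hc_card, hc_sum, hc_flow⟩ := hf.exists_decomposition hH
  refine ⟨c, hc_nonneg, hc_start, hc_card, hc_sum, hc_flow, fun k _ R => ?_⟩
  rw [sum_smul_sum_castSucc_eq_sum_inducedFlow_smul]
  simp only [hc_flow]
end

section
/- Let S be a finite set, s₀ ∈ S, H ≥ 1, k ≥ 1, let P : S × S → ℝ be nonnegative with Σ_{s′∈S} P(s, s′) = 1 for every s ∈ S, and let R : S → ℝ^k. Call a function τ : {0,…,H} → S with τ(0) = s₀ a trajectory; let q(τ) := Π_{t=0}^{H−1} P(τ(t), τ(t+1)) be its probability, Φ(τ) := Σ_{t=0}^{H−1} R(τ(t)) ∈ ℝ^k its return, and V := Σ_τ q(τ)·Φ(τ) the value (the sum running over all trajectories). Then there exist m ≤ k + 1 distinct trajectories τ₁, …, τ_m with q(τᵢ) > 0 for each i, and weights p₁, …, p_m ≥ 0 with Σ_{i=1}^m pᵢ = 1, such that Σ_{i=1}^m pᵢ·Φ(τᵢ) = V. -/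
/-!
The path weights of a stochastic matrix form a probability distribution on the trajectories
from `s₀` (peel off the first transition and induct on the horizon). The value is therefore a
convex combination of returns of trajectories of positive weight, and Carathéodory's theorem in
`ℝ^k` reduces it to a convex combination of at most `k + 1` affinely independent returns, which
come from distinct trajectories.
-/

open Finset Module

section PathWeight

variable {S R : Type*}

def pathWeight [CommMonoid R] (P : S → S → R) {n : ℕ} (f : Fin (n + 1) → S) : R :=
  ∏ t : Fin n, P (f t.castSucc) (f t.succ)

theorem pathWeight_cons [CommMonoid R] (P : S → S → R) {n : ℕ} (s : S) (f : Fin (n + 1) → S) :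
    pathWeight P (Fin.cons s f : Fin (n + 2) → S) = P s (f 0) * pathWeight P f := by
  simp [pathWeight, Fin.prod_univ_succ]

theorem pathWeight_nonneg [CommSemiring R] [PartialOrder R] [IsOrderedRing R] {P : S → S → R}
    (hP : ∀ s s', 0 ≤ P s s') {n : ℕ} (f : Fin (n + 1) → S) : 0 ≤ pathWeight P f :=
  prod_nonneg fun _ _ => hP _ _

theorem sum_pathWeight_cons [Fintype S] [CommSemiring R] {P : S → S → R}
    (hP : ∀ s, ∑ s', P s s' = 1) (n : ℕ) (s₀ : S) :
    ∑ f : Fin n → S, pathWeight P (Fin.cons s₀ f : Fin (n + 1) → S) = 1 := by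
  induction n generalizing s₀ with
  | zero => simp [pathWeight]
  | succ n ih =>
    calc ∑ f : Fin (n + 1) → S, pathWeight P (Fin.cons s₀ f : Fin (n + 2) → S)
        = ∑ s, ∑ g : Fin n → S, P s₀ s * pathWeight P (Fin.cons s g : Fin (n + 1) → S) := by
          rw [← Fintype.sum_prod_type']
          exact (Fintype.sum_equiv (Fin.consEquiv fun _ => S) _ _ fun _ => by
            simp [pathWeight_cons, Fin.consEquiv]).symm
      _ = 1 := by simp_rw [← mul_sum, ih, mul_one, hP]

theorem sum_filter_apply_zero_eq_sum_cons [Fintype S] [DecidableEq S] {M : Type*}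
    [AddCommMonoid M] (n : ℕ) (s₀ : S) (g : (Fin (n + 1) → S) → M) :
    ∑ f ∈ univ.filter (fun f : Fin (n + 1) → S => f 0 = s₀), g f =
      ∑ f : Fin n → S, g (Fin.cons s₀ f) := by
  have hcons : ∀ f ∈ univ.filter (fun f : Fin (n + 1) → S => f 0 = s₀),
      Fin.cons s₀ (Fin.tail f) = f := fun f hf => by
    rw [← (mem_filter.1 hf).2, Fin.cons_self_tail]
  exact sum_nbij' Fin.tail (fun f => Fin.cons s₀ f) (by simp) (by simp) hcons (by simp)
    fun f hf => by rw [hcons f hf]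

theorem sum_pathWeight_filter_eq_one [Fintype S] [DecidableEq S] [CommSemiring R]
    {P : S → S → R} (hP : ∀ s, ∑ s', P s s' = 1) (n : ℕ) (s₀ : S) :
    ∑ f ∈ univ.filter (fun f : Fin (n + 1) → S => f 0 = s₀), pathWeight P f = 1 := by
  rw [sum_filter_apply_zero_eq_sum_cons, sum_pathWeight_cons hP]

end PathWeight

section Caratheodory

variable {𝕜 E ι : Type*} [Field 𝕜] [LinearOrder 𝕜] [IsStrictOrderedRing 𝕜]
  [AddCommGroup E] [Module 𝕜 E] [FiniteDimensional 𝕜 E]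

theorem exists_fin_convexCombination_of_mem_convexHull_image {Φ : ι → E} {t : Set ι} {x : E}
    (hx : x ∈ convexHull 𝕜 (Φ '' t)) :
    ∃ m ≤ finrank 𝕜 E + 1, ∃ (τ : Fin m → ι) (p : Fin m → 𝕜),
      Function.Injective τ ∧ (∀ i, τ i ∈ t) ∧ (∀ i, 0 < p i) ∧ ∑ i, p i = 1 ∧
        ∑ i, p i • Φ (τ i) = x := by
  obtain ⟨κ, _, z, w, hzt, hz, hw0, hw1, hx⟩ := eq_pos_convex_span_of_mem_convexHull hx
  have hcard : Fintype.card κ ≤ finrank 𝕜 E + 1 :=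
    hz.card_le_finrank_succ.trans (by gcongr; exact Submodule.finrank_le _)
  choose τ hτt hτz using fun i => hzt (Set.mem_range_self i)
  let e := (Fintype.equivFin κ).symm
  refine ⟨Fintype.card κ, hcard, τ ∘ e, w ∘ e, ?_, fun i => hτt _, fun i => hw0 _, ?_, ?_⟩
  · exact fun i j h => e.injective (hz.injective (by simpa [hτz] using congrArg Φ h))
  · simpa using (Equiv.sum_comp e w).trans hw1
  · simpa [hτz] using (Equiv.sum_comp e fun i => w i • z i).trans hx

theorem exists_fin_convexCombination_eq_sum_smul (s : Finset ι) {q : ι → 𝕜} {Φ : ι → E}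
    (hq0 : ∀ i ∈ s, 0 ≤ q i) (hq1 : ∑ i ∈ s, q i = 1) :
    ∃ m ≤ finrank 𝕜 E + 1, ∃ (τ : Fin m → ι) (p : Fin m → 𝕜),
      Function.Injective τ ∧ (∀ i, τ i ∈ s ∧ 0 < q (τ i)) ∧ (∀ i, 0 ≤ p i) ∧ ∑ i, p i = 1 ∧
        ∑ i, p i • Φ (τ i) = ∑ i ∈ s, q i • Φ i := by
  classical
  have hsupp : ∀ i ∈ s, i ∉ s.filter (0 < q ·) → q i = 0 := fun i hi hpos =>
    le_antisymm (not_lt.1 fun h => hpos (mem_filter.2 ⟨hi, h⟩)) (hq0 i hi)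
  have hx : ∑ i ∈ s, q i • Φ i ∈ convexHull 𝕜 (Φ '' {i | i ∈ s ∧ 0 < q i}) := by
    rw [← sum_subset (filter_subset _ s) fun i hi hpos => by rw [hsupp i hi hpos, zero_smul]]
    refine (convex_convexHull 𝕜 _).sum_mem (fun i hi => hq0 i (mem_filter.1 hi).1) ?_
      fun i hi => subset_convexHull 𝕜 _ ⟨i, mem_filter.1 hi, rfl⟩
    rwa [sum_subset (filter_subset _ s) hsupp]
  obtain ⟨m, hm, τ, p, hτ, hτs, hp, hp1, hsum⟩ :=
    exists_fin_convexCombination_of_mem_convexHull_image hx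
  exact ⟨m, hm, τ, p, hτ, hτs, fun i => (hp i).le, hp1, hsum⟩

end Caratheodory

theorem stmt16_general (S : Type*) [Fintype S] [DecidableEq S] (s₀ : S)
    (H k : ℕ)
    (P : S → S → ℝ) (hP0 : ∀ s s', 0 ≤ P s s') (hP1 : ∀ s, ∑ s' : S, P s s' = 1)
    (R : S → EuclideanSpace ℝ (Fin k)) :
    ∃ (m : ℕ), m ≤ k + 1 ∧
      ∃ (τ : Fin m → (Fin (H + 1) → S)) (p : Fin m → ℝ),
        Function.Injective τ ∧
        (∀ i, τ i 0 = s₀) ∧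
        (∀ i, 0 < ∏ t : Fin H, P (τ i t.castSucc) (τ i t.succ)) ∧
        (∀ i, 0 ≤ p i) ∧ (∑ i, p i = 1) ∧
        ∑ i, p i • (∑ t : Fin H, R (τ i t.castSucc)) =
          ∑ τ' ∈ Finset.univ.filter (fun τ' : Fin (H + 1) → S => τ' 0 = s₀),
            (∏ t : Fin H, P (τ' t.castSucc) (τ' t.succ)) •
              (∑ t : Fin H, R (τ' t.castSucc)) := by
  obtain ⟨m, hm, τ, p, hτ, hτs, hp0, hp1, hsum⟩ :=
    exists_fin_convexCombination_eq_sum_smul (univ.filter fun τ' : Fin (H + 1) → S => τ' 0 = s₀)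
      (q := pathWeight P) (Φ := fun τ' => ∑ t : Fin H, R (τ' t.castSucc))
      (fun τ' _ => pathWeight_nonneg hP0 τ') (sum_pathWeight_filter_eq_one hP1 H s₀)
  rw [finrank_euclideanSpace_fin] at hm
  exact ⟨m, hm, τ, p, hτ, fun i => (mem_filter.1 (hτs i).1).2, fun i => (hτs i).2, hp0, hp1, hsum⟩

/-- Theorem 4.2, existential content: every policy of a known
finite-horizon MDP (abstracted as the Markov chain on states it induces, with
per-state reward R(s) ∈ ℝ^k) admits a weighted trajectory set representation
with at most k+1 trajectories in its support whose weighted return equals the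
value of the policy. -/
theorem stmt16 (S : Type*) [Fintype S] [DecidableEq S] (s₀ : S)
    (H k : ℕ) (hH : 1 ≤ H) (hk : 1 ≤ k)
    (P : S → S → ℝ) (hP0 : ∀ s s', 0 ≤ P s s') (hP1 : ∀ s, ∑ s' : S, P s s' = 1)
    (R : S → EuclideanSpace ℝ (Fin k)) :
    ∃ (m : ℕ), m ≤ k + 1 ∧
      ∃ (τ : Fin m → (Fin (H + 1) → S)) (p : Fin m → ℝ),
        Function.Injective τ ∧
        (∀ i, τ i 0 = s₀) ∧
        (∀ i, 0 < ∏ t : Fin H, P (τ i t.castSucc) (τ i t.succ)) ∧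
        (∀ i, 0 ≤ p i) ∧ (∑ i, p i = 1) ∧
        ∑ i, p i • (∑ t : Fin H, R (τ i t.castSucc)) =
          ∑ τ' ∈ Finset.univ.filter (fun τ' : Fin (H + 1) → S => τ' 0 = s₀),
            (∏ t : Fin H, P (τ' t.castSucc) (τ' t.succ)) •
              (∑ t : Fin H, R (τ' t.castSucc)) :=
  stmt16_general S s₀ H k P hP0 hP1 R
end
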